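/- The largest eigenvalue μ of the Laplacian matrix of the graph G strictly exceeds max over all pairs of adjacent vertices v ~ j of 2·(m_v² + m_j²)/(2 + √(2·((d_v − 1)² + (d_j − 1)²))). (This gives a counterexample to conjectured bound 61 of Brankov, Hansen and Stevanović.) -/

import Mathlib

/-- The edge list of the graph. -/
def edgeList : List (Fin 12 × Fin 12) :=
  [(0,3),(0,4),(0,8),(1,2),(1,3),(1,8),(1,10),(2,5),(2,7),(2,11),(3,7),(3,11),(4,6),(4,7),(5,8),(5,9),(6,9),(6,10),(7,10),(9,11),(10,11)]

/-- The graph under consideration. -/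
def G : SimpleGraph (Fin 12) where
  Adj v w := (v, w) ∈ edgeList ∨ (w, v) ∈ edgeList
  symm := ⟨fun _ _ h => h.symm⟩
  loopless := ⟨by intro v; fin_cases v <;> decide⟩

instance : DecidableRel G.Adj :=
  fun v w => inferInstanceAs (Decidable ((v, w) ∈ edgeList ∨ (w, v) ∈ edgeList))

/-- `d v` is the degree of the vertex `v`, as a real number. -/
noncomputable def d (v : Fin 12) : ℝ := G.degree v

/-- `m v` is the average of the degrees of the neighbours of `v`. -/
noncomputable def m (v : Fin 12) : ℝ :=
  (∑ u ∈ G.neighborFinset v, (G.degree u : ℝ)) / d v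

/-- Every vertex of `G` has degree 3 with average neighbour degree 10/3,
or degree 4 with average neighbour degree 15/4. -/
lemma dm_vals (v : Fin 12) : (d v = 3 ∧ m v = 10/3) ∨ (d v = 4 ∧ m v = 15/4) := by
  have key : ∀ u : Fin 12, (G.degree u = 3 ∧ (∑ w ∈ G.neighborFinset u, G.degree w) = 10)
      ∨ (G.degree u = 4 ∧ (∑ w ∈ G.neighborFinset u, G.degree w) = 15) := by decide
  rcases key v with ⟨h1, h2⟩ | ⟨h1, h2⟩
  · left; rw [d, m, d, ← Nat.cast_sum, h1, h2]; norm_num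
  · right; rw [d, m, d, ← Nat.cast_sum, h1, h2]; norm_num

/-- A test vector for the Rayleigh quotient. -/
noncomputable def tv : Fin 12 → ℝ := ![-12,-29,29,29,12,-12,-12,-29,12,12,29,-29]

open Matrix in
open scoped RealInnerProductSpace in
/-- The Rayleigh quotient of `tv` gives a lower bound on the spectral radius. -/
lemma mu_lower_bound (μ : ℝ)
    (hmax : ∀ ν ∈ spectrum ℝ (G.lapMatrix ℝ), ν ≤ μ) : (7303:ℝ)/985 ≤ μ := by
  set L := G.lapMatrix ℝ with hL
  have hHerm : L.IsHermitian := (SimpleGraph.posSemidef_lapMatrix ℝ G).1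
  have hT : (Matrix.toEuclideanLin L).IsSymmetric := Matrix.isHermitian_iff_isSymmetric.mp hHerm
  have hEig := hT.hasEigenvalue_iSup_of_finiteDimensional
  set s : ℝ := ⨆ x : {x : EuclideanSpace ℝ (Fin 12) // x ≠ 0},
      RCLike.re ⟪(Matrix.toEuclideanLin L) x, x⟫ / ‖(x : EuclideanSpace ℝ (Fin 12))‖ ^ 2 with hs
  have hs_mem : s ∈ spectrum ℝ (Matrix.toEuclideanLin L) :=
    Module.End.hasEigenvalue_iff_mem_spectrum.mp hEig
  have hs_le : s ≤ μ := hmax s (by rwa [← Matrix.spectrum_toEuclideanLin (A := L)])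
  -- test vector
  set x : EuclideanSpace ℝ (Fin 12) := (WithLp.equiv 2 (Fin 12 → ℝ)).symm tv with hx
  have hxne : x ≠ 0 := by
    intro h
    have h0 : tv 0 = 0 := congrArg (fun y : EuclideanSpace ℝ (Fin 12) => y 0) h
    norm_num [tv, Matrix.cons_val_zero] at h0
  -- Rayleigh value
  have hinner : ⟪(Matrix.toEuclideanLin L) x, x⟫ = 43818 := by
    have : ⟪(Matrix.toEuclideanLin L) x, x⟫ = (L *ᵥ tv) ⬝ᵥ tv := by
      rw [Matrix.toEuclideanLin_apply]
      simp only [PiLp.inner_apply, RCLike.inner_apply, conj_trivial, dotProduct]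
      exact Finset.sum_congr rfl fun i _ => mul_comm _ _
    rw [this, dotProduct_comm, ← Matrix.toLinearMap₂'_apply', hL,
      SimpleGraph.lapMatrix_toLinearMap₂']
    have : (∑ i : Fin 12, ∑ j : Fin 12, if G.Adj i j then (tv i - tv j)^2 else 0) = (87636 : ℝ) := by
      simp (config := { decide := true }) only [Fin.sum_univ_succ, Fin.sum_univ_zero, tv,
        Matrix.cons_val_zero, Matrix.cons_val_one, Matrix.head_cons, Matrix.cons_val_succ,
        if_true, if_false]
      norm_num
    rw [this]; norm_num
  have hnorm : ‖x‖^2 = 5910 := by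
    rw [← real_inner_self_eq_norm_sq]
    simp only [PiLp.inner_apply, RCLike.inner_apply, conj_trivial]
    have : (∑ i : Fin 12, tv i * tv i) = (5910:ℝ) := by
      simp only [Fin.sum_univ_succ, Fin.sum_univ_zero, tv, Matrix.cons_val_zero,
        Matrix.cons_val_one, Matrix.head_cons, Matrix.cons_val_succ]
      norm_num
    simpa [hx, WithLp.equiv] using this
  have hbdd : BddAbove (Set.range (fun x : {x : EuclideanSpace ℝ (Fin 12) // x ≠ 0} =>
      RCLike.re ⟪(Matrix.toEuclideanLin L) x, x⟫ / ‖(x : EuclideanSpace ℝ (Fin 12))‖ ^ 2)) := by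
    refine ⟨‖LinearMap.toContinuousLinearMap (Matrix.toEuclideanLin L)‖, ?_⟩
    rintro r ⟨⟨y, hy⟩, rfl⟩
    have hny : 0 < ‖y‖ := norm_pos_iff.mpr hy
    simp only [RCLike.re_to_real]
    rw [div_le_iff₀ (by positivity)]
    calc ⟪(Matrix.toEuclideanLin L) y, y⟫ ≤ ‖(Matrix.toEuclideanLin L) y‖ * ‖y‖ :=
          real_inner_le_norm _ _
      _ ≤ (‖LinearMap.toContinuousLinearMap (Matrix.toEuclideanLin L)‖ * ‖y‖) * ‖y‖ := by
          have h2 : ‖(Matrix.toEuclideanLin L) y‖ ≤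
              ‖LinearMap.toContinuousLinearMap (Matrix.toEuclideanLin L)‖ * ‖y‖ :=
            (LinearMap.toContinuousLinearMap (Matrix.toEuclideanLin L)).le_opNorm y
          nlinarith
      _ = ‖LinearMap.toContinuousLinearMap (Matrix.toEuclideanLin L)‖ * ‖y‖ ^ 2 := by ring
  have h7 : RCLike.re (⟪(Matrix.toEuclideanLin L) x, x⟫ : ℝ) / ‖x‖ ^ 2 ≤ s := by
    rw [hs]; exact le_ciSup hbdd ⟨x, hxne⟩
  have h8 : RCLike.re (⟪(Matrix.toEuclideanLin L) x, x⟫ : ℝ) / ‖x‖ ^ 2 = 7303/985 := by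
    simp only [RCLike.re_to_real]
    rw [hinner, hnorm]; norm_num
  linarith

theorem laplacian_spectral_radius_exceeds_bound (μ : ℝ)
    (hmem : μ ∈ spectrum ℝ (G.lapMatrix ℝ))
    (hmax : ∀ ν ∈ spectrum ℝ (G.lapMatrix ℝ), ν ≤ μ) :
    (Finset.univ.filter fun p : _ × _ => G.Adj p.1 p.2).sup' (by decide)
      (fun p => 2 * (m p.1 ^ 2 + m p.2 ^ 2) / (2 + Real.sqrt (2 * ((d p.1 - 1) ^ 2 + (d p.2 - 1) ^ 2)))) < μ := by
  have hmu : (7303:ℝ)/985 ≤ μ := mu_lower_bound μ hmax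
  rw [Finset.sup'_lt_iff]
  intro p hp
  have h26 : (5:ℝ) ≤ Real.sqrt 26 := by
    rw [show (5:ℝ) = Real.sqrt 25 by
      rw [show (25:ℝ) = 5^2 by norm_num, Real.sqrt_sq (by norm_num)]]
    exact Real.sqrt_le_sqrt (by norm_num)
  have hpos26 : (0:ℝ) < 2 + Real.sqrt 26 := by positivity
  have hkey := mul_le_mul_of_nonneg_right hmu hpos26.le
  rcases dm_vals p.1 with ⟨h1, h1'⟩ | ⟨h1, h1'⟩ <;> rcases dm_vals p.2 with ⟨h2, h2'⟩ | ⟨h2, h2'⟩ <;>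
    rw [h1, h1', h2, h2']
  · rw [show (2:ℝ) * ((3 - 1) ^ 2 + (3 - 1) ^ 2) = 4 ^ 2 by norm_num,
      Real.sqrt_sq (by norm_num)]
    rw [div_lt_iff₀ (by norm_num)]
    linarith
  · rw [show (2:ℝ) * ((3 - 1) ^ 2 + (4 - 1) ^ 2) = 26 by norm_num,
      div_lt_iff₀ hpos26]
    nlinarith [h26, hkey]
  · rw [show (2:ℝ) * ((4 - 1) ^ 2 + (3 - 1) ^ 2) = 26 by norm_num,
      div_lt_iff₀ hpos26]
    nlinarith [h26, hkey]
  · rw [show (2:ℝ) * ((4 - 1) ^ 2 + (4 - 1) ^ 2) = 6 ^ 2 by norm_num,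
      Real.sqrt_sq (by norm_num)]
    rw [div_lt_iff₀ (by norm_num)]
    linarith
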